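/- Let Φ₁ and Φ₂ be trace-preserving positive (CPTP) maps on states of a finite-dimensional Hilbert space with unique fixed points ρ₁ and ρ₂ respectively, and let t_{mix,1}(ε) denote the mixing time of Φ₁ (the least n such that ‖Φ₁ⁿ(σ) − ρ₁‖₁ ≤ ε for all states σ). Then ‖ρ₁ − ρ₂‖₁ ≤ ε + t_{mix,1}(ε)·‖Φ₁ − Φ₂‖_{1→1}. -/

import Mathlib

open Matrix
open scoped ComplexOrder

variable {n : Type*} [Fintype n] [DecidableEq n]

/-- The positive semidefinite square root of a positive semidefinite matrix, as defined in
Mathlib of December 2024 (`Matrix.PosSemidef.sqrt`, since removed). -/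
noncomputable def Matrix.PosSemidef.sqrt {M : Matrix n n ℂ} (hA : M.PosSemidef) : Matrix n n ℂ :=
  hA.1.eigenvectorUnitary * diagonal (fun i => ((√(hA.1.eigenvalues i) : ℝ) : ℂ)) *
    (star hA.1.eigenvectorUnitary : Matrix n n ℂ)

/-- The trace norm `‖A‖₁ = Tr √(A†A)`. -/
noncomputable def traceNorm (A : Matrix n n ℂ) : ℝ :=
  ((Matrix.PosSemidef.sqrt (Matrix.posSemidef_conjTranspose_mul_self A)).trace).re

/-- A quantum state: positive semidefinite with unit trace. -/
def IsState (σ : Matrix n n ℂ) : Prop := σ.PosSemidef ∧ σ.trace = 1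

/-- The `1 → 1` (trace norm to trace norm) induced norm of a superoperator. -/
noncomputable def oneNorm (Φ : Module.End ℂ (Matrix n n ℂ)) : ℝ :=
  sSup {c : ℝ | ∃ X : Matrix n n ℂ, traceNorm X ≤ 1 ∧ c = traceNorm (Φ X)}

/-- The mixing time of a channel `Φ` with fixed point `ρ`: the least number of iterations
after which every state is `ε`-close to `ρ` in trace norm. -/
noncomputable def tmix (Φ : Module.End ℂ (Matrix n n ℂ)) (ρ : Matrix n n ℂ) (ε : ℝ) : ℕ :=
  sInf {m : ℕ | ∀ σ : Matrix n n ℂ, IsState σ → traceNorm ((Φ ^ m) σ - ρ) ≤ ε}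

/-! Put `t = t_mix,1(ε)` and run `Φ₁` for `t` steps starting from `ρ₂`. By definition of the mixing
time, `Φ₁ᵗ ρ₂` is `ε`-close to `ρ₁`. Since `Φ₂ ρ₂ = ρ₂`, each step moves the orbit by
`Φ₁^(k+1) ρ₂ - Φ₁^k ρ₂ = Φ₁^k ((Φ₁ - Φ₂) ρ₂)`, and positive trace-preserving maps do not increase
the trace norm of self-adjoint matrices, so `‖Φ₁ᵗ ρ₂ - ρ₂‖₁ ≤ t ‖Φ₁ - Φ₂‖_{1→1}`.

Contractivity rests on `‖P - Q‖₁ ≤ tr P + tr Q` for `P, Q ≥ 0`, obtained by pairing `P - Q` with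
its sign `S = sgn (P - Q)`: `|P - Q| = (P - Q) S` and `-1 ≤ S ≤ 1`. Applied to the images of the
Jordan decomposition `X = X⁺ - X⁻`, for which `‖X‖₁ = tr X⁺ + tr X⁻`, it gives `‖Φ X‖₁ ≤ ‖X‖₁`. -/

open scoped MatrixOrder

namespace Matrix

variable {ι 𝕜 : Type*} [Fintype ι] [RCLike 𝕜]

lemma re_trace_nonneg {P : Matrix ι ι 𝕜} (hP : 0 ≤ P) : 0 ≤ RCLike.re P.trace :=
  (RCLike.nonneg_iff.mp (nonneg_iff_posSemidef.mp hP).trace_nonneg).1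

section Frobenius

attribute [local instance] frobeniusNormedAddCommGroup

lemma frobenius_norm_sq_eq_re_trace {m : Type*} [Fintype m] (A : Matrix m ι 𝕜) :
    ‖A‖ ^ 2 = RCLike.re (Aᴴ * A).trace := by
  rw [frobenius_norm_def, ← Real.rpow_natCast, ← Real.rpow_mul (by positivity)]
  norm_num
  simp [trace, mul_apply, RCLike.conj_mul, Finset.sum_comm (γ := m)]

end Frobenius

variable [DecidableEq ι]

lemma re_trace_mul_nonneg {P M : Matrix ι ι 𝕜} (hP : 0 ≤ P) (hM : 0 ≤ M) :
    0 ≤ RCLike.re (P * M).trace := by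
  have h : (P * M).trace = (CFC.sqrt P * M * CFC.sqrt P).trace := by
    rw [trace_mul_cycle, CFC.sqrt_mul_sqrt_self P hP]
  rw [h]
  exact re_trace_nonneg (conjugate_nonneg_of_nonneg hM (CFC.sqrt_nonneg P))

lemma re_trace_abs_sub_le {P Q : Matrix ι ι 𝕜} (hP : 0 ≤ P) (hQ : 0 ≤ Q) :
    RCLike.re (CFC.abs (P - Q)).trace ≤ RCLike.re P.trace + RCLike.re Q.trace := by
  set X := P - Q
  have hX : IsSelfAdjoint X := hP.isSelfAdjoint.sub hQ.isSelfAdjoint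
  set sgn : ℝ → ℝ := fun x => (SignType.sign x : ℝ)
  set S := cfc sgn X
  -- every function is continuous on the finite spectrum of a matrix
  have hcont : ContinuousOn sgn (spectrum ℝ X) := X.finite_real_spectrum.continuousOn _
  have habs : CFC.abs X = P * S - Q * S := by
    rw [← sub_mul, CFC.abs_eq_cfc_norm X hX]
    calc cfc (‖·‖) X = cfc (fun x : ℝ => x * sgn x) X :=
          cfc_congr fun x _ => by rw [self_mul_sign, Real.norm_eq_abs]
      _ = X * S := by rw [cfc_mul _ _ X, cfc_id' ℝ X]
  have hS_le : 0 ≤ 1 - S := by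
    rw [← cfc_one ℝ X, ← cfc_sub (a := X) (f := 1) (g := sgn)]
    exact cfc_nonneg fun x _ => by simp only [sgn]; cases SignType.sign x <;> norm_num
  have hS_ge : 0 ≤ 1 + S := by
    rw [← cfc_one ℝ X, ← cfc_add (a := X) (f := 1) (g := sgn)]
    exact cfc_nonneg fun x _ => by simp only [sgn]; cases SignType.sign x <;> norm_num
  have hPS := re_trace_mul_nonneg hP hS_le
  have hQS := re_trace_mul_nonneg hQ hS_ge
  simp only [mul_sub, mul_add, mul_one, trace_sub, trace_add, map_sub, map_add] at hPS hQS
  rw [habs, trace_sub, map_sub]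
  linarith

lemma IsHermitian.trace_cfc {A : Matrix ι ι 𝕜} (hA : A.IsHermitian) (f : ℝ → ℝ) :
    (cfc f A).trace = ∑ i, (f (hA.eigenvalues i) : 𝕜) := by
  rw [hA.cfc_eq, IsHermitian.cfc, Unitary.conjStarAlgAut_apply, trace_mul_cycle,
    Unitary.coe_star_mul_self, one_mul, trace_diagonal]
  rfl

lemma IsHermitian.re_trace_eq_sum_eigenvalues {A : Matrix ι ι 𝕜} (hA : A.IsHermitian) :
    RCLike.re A.trace = ∑ i, hA.eigenvalues i := by
  simp only [hA.trace_eq_sum_eigenvalues, map_sum, RCLike.ofReal_re]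

lemma IsHermitian.re_trace_mul_self {A : Matrix ι ι 𝕜} (hA : A.IsHermitian) :
    RCLike.re (A * A).trace = ∑ i, hA.eigenvalues i ^ 2 := by
  have hsq : A * A = cfc (fun x : ℝ => x ^ 2) A := by
    rw [← sq]
    exact (cfc_pow_id A 2 hA).symm
  rw [hsq, hA.trace_cfc]
  simp only [map_sum, RCLike.ofReal_re]

lemma PosSemidef.re_trace_mul_self_le_sq {S : Matrix ι ι 𝕜} (hS : S.PosSemidef) :
    RCLike.re (S * S).trace ≤ RCLike.re S.trace ^ 2 := by
  rw [hS.isHermitian.re_trace_mul_self, hS.isHermitian.re_trace_eq_sum_eigenvalues]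
  exact Finset.sum_sq_le_sq_sum_of_nonneg fun i _ => hS.eigenvalues_nonneg i

lemma IsHermitian.sq_re_trace_le_card_mul {S : Matrix ι ι 𝕜} (hS : S.IsHermitian) :
    RCLike.re S.trace ^ 2 ≤ Fintype.card ι * RCLike.re (S * S).trace := by
  rw [hS.re_trace_mul_self, hS.re_trace_eq_sum_eigenvalues]
  exact sq_sum_le_card_mul_sum_sq

end Matrix

lemma Matrix.PosSemidef.sqrt_eq_cfc_sqrt {M : Matrix n n ℂ} (hM : M.PosSemidef) :
    hM.sqrt = CFC.sqrt M := by
  rw [CFC.sqrt_eq_real_sqrt M hM.nonneg, cfcₙ_eq_cfc, hM.1.cfc_eq]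
  rfl

lemma traceNorm_eq_re_trace_abs (A : Matrix n n ℂ) : traceNorm A = (CFC.abs A).trace.re := by
  rw [traceNorm, PosSemidef.sqrt_eq_cfc_sqrt, CFC.abs, star_eq_conjTranspose]

lemma traceNorm_nonneg (A : Matrix n n ℂ) : 0 ≤ traceNorm A := by
  rw [traceNorm_eq_re_trace_abs]
  exact re_trace_nonneg (CFC.abs_nonneg A)

lemma traceNorm_of_nonneg {P : Matrix n n ℂ} (hP : 0 ≤ P) : traceNorm P = P.trace.re := by
  rw [traceNorm_eq_re_trace_abs, CFC.abs_of_nonneg P hP]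

lemma traceNorm_zero : traceNorm (0 : Matrix n n ℂ) = 0 := by
  simp [traceNorm_of_nonneg le_rfl]

lemma traceNorm_sub_comm (A B : Matrix n n ℂ) : traceNorm (A - B) = traceNorm (B - A) := by
  rw [traceNorm_eq_re_trace_abs, traceNorm_eq_re_trace_abs, ← CFC.abs_neg, neg_sub]

lemma traceNorm_sub_le {P Q : Matrix n n ℂ} (hP : 0 ≤ P) (hQ : 0 ≤ Q) :
    traceNorm (P - Q) ≤ P.trace.re + Q.trace.re := by
  rw [traceNorm_eq_re_trace_abs]
  exact re_trace_abs_sub_le hP hQ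

lemma traceNorm_eq_re_trace_posPart_add_negPart {X : Matrix n n ℂ} (hX : IsSelfAdjoint X) :
    traceNorm X = (X⁺).trace.re + (X⁻).trace.re := by
  rw [traceNorm_eq_re_trace_abs, ← CFC.posPart_add_negPart X hX, trace_add, Complex.add_re]

lemma traceNorm_add_le {A B : Matrix n n ℂ} (hA : IsSelfAdjoint A) (hB : IsSelfAdjoint B) :
    traceNorm (A + B) ≤ traceNorm A + traceNorm B := by
  have hAB : A + B = (A⁺ + B⁺) - (A⁻ + B⁻) := by
    nth_rw 1 [← CFC.posPart_sub_negPart A hA, ← CFC.posPart_sub_negPart B hB]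
    abel
  have h := traceNorm_sub_le (add_nonneg (CFC.posPart_nonneg A) (CFC.posPart_nonneg B))
    (add_nonneg (CFC.negPart_nonneg A) (CFC.negPart_nonneg B))
  rw [traceNorm_eq_re_trace_posPart_add_negPart hA, traceNorm_eq_re_trace_posPart_add_negPart hB,
    hAB]
  simp only [trace_add, Complex.add_re] at h
  linarith

lemma traceNorm_sub_le_traceNorm_sub_add_traceNorm_sub {A B C : Matrix n n ℂ}
    (hA : IsSelfAdjoint A) (hB : IsSelfAdjoint B) (hC : IsSelfAdjoint C) :
    traceNorm (A - C) ≤ traceNorm (A - B) + traceNorm (B - C) := by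
  rw [← sub_add_sub_cancel A B C]
  exact traceNorm_add_le (hA.sub hB) (hB.sub hC)

section Frobenius

attribute [local instance] frobeniusNormedAddCommGroup frobeniusNormedSpace

lemma frobenius_norm_le_traceNorm (X : Matrix n n ℂ) : ‖X‖ ≤ traceNorm X := by
  have h : ‖X‖ ^ 2 ≤ traceNorm X ^ 2 := by
    rw [frobenius_norm_sq_eq_re_trace, ← star_eq_conjTranspose, ← CFC.abs_mul_abs,
      traceNorm_eq_re_trace_abs]
    exact (nonneg_iff_posSemidef.mp (CFC.abs_nonneg X)).re_trace_mul_self_le_sq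
  exact (pow_le_pow_iff_left₀ (norm_nonneg X) (traceNorm_nonneg X) two_ne_zero).mp h

lemma traceNorm_le_sqrt_card_mul_frobenius_norm (X : Matrix n n ℂ) :
    traceNorm X ≤ √(Fintype.card n) * ‖X‖ := by
  have h : traceNorm X ^ 2 ≤ (√(Fintype.card n) * ‖X‖) ^ 2 := by
    rw [mul_pow, Real.sq_sqrt (Nat.cast_nonneg _), frobenius_norm_sq_eq_re_trace,
      ← star_eq_conjTranspose, ← CFC.abs_mul_abs, traceNorm_eq_re_trace_abs]
    exact (nonneg_iff_posSemidef.mp (CFC.abs_nonneg X)).isHermitian.sq_re_trace_le_card_mul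
  exact (pow_le_pow_iff_left₀ (traceNorm_nonneg X) (by positivity) two_ne_zero).mp h

lemma exists_traceNorm_apply_le (Ψ : Module.End ℂ (Matrix n n ℂ)) :
    ∃ C ≥ 0, ∀ X, traceNorm (Ψ X) ≤ C * traceNorm X := by
  obtain ⟨C, hC, hΨ⟩ :=
    SemilinearMapClass.bound_of_continuous Ψ (LinearMap.continuous_of_finiteDimensional Ψ)
  refine ⟨√(Fintype.card n) * C, by positivity, fun X => ?_⟩
  calc traceNorm (Ψ X) ≤ √(Fintype.card n) * ‖Ψ X‖ := traceNorm_le_sqrt_card_mul_frobenius_norm _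
    _ ≤ √(Fintype.card n) * (C * traceNorm X) := by
        gcongr
        exact (hΨ X).trans (by gcongr; exact frobenius_norm_le_traceNorm X)
    _ = √(Fintype.card n) * C * traceNorm X := by ring

end Frobenius

lemma traceNorm_apply_le_oneNorm (Ψ : Module.End ℂ (Matrix n n ℂ)) {X : Matrix n n ℂ}
    (hX : traceNorm X ≤ 1) : traceNorm (Ψ X) ≤ oneNorm Ψ := by
  obtain ⟨C, hC, hΨ⟩ := exists_traceNorm_apply_le Ψ
  refine le_csSup ⟨C, ?_⟩ ⟨X, hX, rfl⟩
  rintro c ⟨Y, hY, rfl⟩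
  exact (hΨ Y).trans (mul_le_of_le_one_right hC hY)

def IsPositiveMap (Φ : Module.End ℂ (Matrix n n ℂ)) : Prop :=
  ∀ σ : Matrix n n ℂ, σ.PosSemidef → (Φ σ).PosSemidef

def IsTracePreserving (Φ : Module.End ℂ (Matrix n n ℂ)) : Prop :=
  ∀ σ : Matrix n n ℂ, (Φ σ).trace = σ.trace

variable {Φ : Module.End ℂ (Matrix n n ℂ)}

omit [Fintype n] [DecidableEq n] in
lemma IsPositiveMap.pow (hΦ : IsPositiveMap Φ) (m : ℕ) : IsPositiveMap (Φ ^ m) := by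
  induction m with
  | zero => intro σ hσ; simpa using hσ
  | succ m ih =>
    intro σ hσ
    rw [pow_succ, Module.End.mul_apply]
    exact ih _ (hΦ σ hσ)

omit [DecidableEq n] in
lemma IsTracePreserving.pow (hΦ : IsTracePreserving Φ) (m : ℕ) : IsTracePreserving (Φ ^ m) := by
  induction m with
  | zero => simp [IsTracePreserving]
  | succ m ih => exact fun σ => by rw [pow_succ, Module.End.mul_apply, ih, hΦ]

lemma IsPositiveMap.isSelfAdjoint_apply (hΦ : IsPositiveMap Φ) {X : Matrix n n ℂ}
    (hX : IsSelfAdjoint X) : IsSelfAdjoint (Φ X) := by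
  rw [← CFC.posPart_sub_negPart X hX, map_sub]
  exact (hΦ _ (CFC.posPart_nonneg X).posSemidef).isHermitian.sub
    (hΦ _ (CFC.negPart_nonneg X).posSemidef).isHermitian

lemma IsPositiveMap.traceNorm_apply_le (hΦ : IsPositiveMap Φ) (htp : IsTracePreserving Φ)
    {X : Matrix n n ℂ} (hX : IsSelfAdjoint X) : traceNorm (Φ X) ≤ traceNorm X := by
  rw [traceNorm_eq_re_trace_posPart_add_negPart hX, ← htp X⁺, ← htp X⁻]
  conv_lhs => rw [← CFC.posPart_sub_negPart X hX, map_sub]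
  exact traceNorm_sub_le (hΦ _ (CFC.posPart_nonneg X).posSemidef).nonneg
    (hΦ _ (CFC.negPart_nonneg X).posSemidef).nonneg

lemma traceNorm_pow_apply_sub_le (hΦ : IsPositiveMap Φ) (htp : IsTracePreserving Φ)
    {ρ : Matrix n n ℂ} (hρ : ρ.PosSemidef) (m : ℕ) :
    traceNorm ((Φ ^ m) ρ - ρ) ≤ m * traceNorm (Φ ρ - ρ) := by
  induction m with
  | zero => simp [traceNorm_zero]
  | succ m ih =>
    have hstep : IsSelfAdjoint (Φ ρ - ρ) := (hΦ ρ hρ).isHermitian.sub hρ.isHermitian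
    calc traceNorm ((Φ ^ (m + 1)) ρ - ρ)
        = traceNorm ((Φ ^ m) (Φ ρ - ρ) + ((Φ ^ m) ρ - ρ)) := by
          rw [pow_succ, Module.End.mul_apply, map_sub, sub_add_sub_cancel]
      _ ≤ traceNorm ((Φ ^ m) (Φ ρ - ρ)) + traceNorm ((Φ ^ m) ρ - ρ) :=
          traceNorm_add_le ((hΦ.pow m).isSelfAdjoint_apply hstep)
            ((hΦ.pow m ρ hρ).isHermitian.sub hρ.isHermitian)
      _ ≤ traceNorm (Φ ρ - ρ) + m * traceNorm (Φ ρ - ρ) :=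
          add_le_add ((hΦ.pow m).traceNorm_apply_le (htp.pow m) hstep) ih
      _ = (m + 1 : ℕ) * traceNorm (Φ ρ - ρ) := by push_cast; ring

theorem fixed_point_distance_bound_general (Φ₁ Φ₂ : Module.End ℂ (Matrix n n ℂ))
    (ρ₁ ρ₂ : Matrix n n ℂ)
    (hpos₁ : ∀ σ : Matrix n n ℂ, σ.PosSemidef → (Φ₁ σ).PosSemidef)
    (htp₁ : ∀ σ : Matrix n n ℂ, (Φ₁ σ).trace = σ.trace)
    (hρ₁ : IsState ρ₁)
    (hρ₂ : IsState ρ₂) (hfix₂ : Φ₂ ρ₂ = ρ₂)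
    (ε : ℝ)
    (hmix : {m : ℕ | ∀ σ : Matrix n n ℂ, IsState σ →
      traceNorm ((Φ₁ ^ m) σ - ρ₁) ≤ ε}.Nonempty) :
    traceNorm (ρ₁ - ρ₂) ≤ ε + (tmix Φ₁ ρ₁ ε : ℝ) * oneNorm (Φ₁ - Φ₂) := by
  set t := tmix Φ₁ ρ₁ ε
  have hmixed : traceNorm ((Φ₁ ^ t) ρ₂ - ρ₁) ≤ ε := Nat.sInf_mem hmix ρ₂ hρ₂
  have hstep : traceNorm (Φ₁ ρ₂ - ρ₂) ≤ oneNorm (Φ₁ - Φ₂) := by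
    have hρ₂_norm : traceNorm ρ₂ ≤ 1 := by
      rw [traceNorm_of_nonneg hρ₂.1.nonneg, hρ₂.2, Complex.one_re]
    simpa [hfix₂] using traceNorm_apply_le_oneNorm (Φ₁ - Φ₂) hρ₂_norm
  have hdrift : traceNorm ((Φ₁ ^ t) ρ₂ - ρ₂) ≤ t * oneNorm (Φ₁ - Φ₂) :=
    (traceNorm_pow_apply_sub_le hpos₁ htp₁ hρ₂.1 t).trans (by gcongr)
  calc traceNorm (ρ₁ - ρ₂)
      ≤ traceNorm (ρ₁ - (Φ₁ ^ t) ρ₂) + traceNorm ((Φ₁ ^ t) ρ₂ - ρ₂) :=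
        traceNorm_sub_le_traceNorm_sub_add_traceNorm_sub hρ₁.1.isHermitian
          (IsPositiveMap.pow hpos₁ t ρ₂ hρ₂.1).isHermitian hρ₂.1.isHermitian
    _ ≤ ε + t * oneNorm (Φ₁ - Φ₂) := by
        rw [traceNorm_sub_comm]
        exact add_le_add hmixed hdrift

/-- The unique fixed points of two nearby trace-preserving positive maps are close:
`‖ρ₁ − ρ₂‖₁ ≤ ε + t_{mix,1}(ε)·‖Φ₁ − Φ₂‖_{1→1}`. -/
theorem fixed_point_distance_bound (Φ₁ Φ₂ : Module.End ℂ (Matrix n n ℂ))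
    (ρ₁ ρ₂ : Matrix n n ℂ)
    (hpos₁ : ∀ σ : Matrix n n ℂ, σ.PosSemidef → (Φ₁ σ).PosSemidef)
    (hpos₂ : ∀ σ : Matrix n n ℂ, σ.PosSemidef → (Φ₂ σ).PosSemidef)
    (htp₁ : ∀ σ : Matrix n n ℂ, (Φ₁ σ).trace = σ.trace)
    (htp₂ : ∀ σ : Matrix n n ℂ, (Φ₂ σ).trace = σ.trace)
    (hρ₁ : IsState ρ₁) (hfix₁ : Φ₁ ρ₁ = ρ₁)
    (huniq₁ : ∀ σ : Matrix n n ℂ, IsState σ → Φ₁ σ = σ → σ = ρ₁)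
    (hρ₂ : IsState ρ₂) (hfix₂ : Φ₂ ρ₂ = ρ₂)
    (huniq₂ : ∀ σ : Matrix n n ℂ, IsState σ → Φ₂ σ = σ → σ = ρ₂)
    (ε : ℝ) (hε : 0 < ε)
    (hmix : {m : ℕ | ∀ σ : Matrix n n ℂ, IsState σ →
      traceNorm ((Φ₁ ^ m) σ - ρ₁) ≤ ε}.Nonempty) :
    traceNorm (ρ₁ - ρ₂) ≤ ε + (tmix Φ₁ ρ₁ ε : ℝ) * oneNorm (Φ₁ - Φ₂) :=
  fixed_point_distance_bound_general Φ₁ Φ₂ ρ₁ ρ₂ hpos₁ htp₁ hρ₁ hρ₂ hfix₂ ε hmix
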